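/- Let 0 ≤ α₁ ≤ α₂ ≤ π/2, and let P¹, P² ⊂ ℝ⁴ be two 2-dimensional planes with characteristic angles (α₁, α₂); concretely, in an orthonormal basis e₁,e₂,e₃,e₄, P¹ = span(e₁,e₂) and P² = span(cos α₁ e₁ + sin α₁ e₃, cos α₂ e₂ + sin α₂ e₄). Denote by p^i the orthogonal projection on P^i acting on 2-vectors. Then for every unit simple 2-vector ζ ∈ ∧₂ℝ⁴, |p¹ζ| + |p²ζ| ≤ 1 + 2 cos α₁. -/

import Mathlib

/-!
Write `ζ = x ∧ y` in the Plücker coordinates `ξᵢⱼ = ⟪eᵢ ∧ eⱼ, ζ⟫`. Then `|p¹ζ| = |ξ₁₂|`, and with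
`u = cos α₁ e₁ + sin α₁ e₃`, `v = cos α₂ e₂ + sin α₂ e₄` we get `|p²ζ| = |⟪u ∧ v, ζ⟫|`. Since
`|⟪a ∧ b, ζ⟫| ≤ 1` for every orthonormal pair `a, b`, expanding `u` and then `v` gives
`|p²ζ| ≤ cos α₁ + cos α₂ + |ξ₃₄|`. Finally the Plücker relation `ξ₁₂ ξ₃₄ = ξ₁₃ ξ₂₄ - ξ₁₄ ξ₂₃`
together with `∑ ξᵢⱼ² ≤ 1` yields `|ξ₁₂| + |ξ₃₄| ≤ 1`, so that
`|p¹ζ| + |p²ζ| ≤ 1 + cos α₁ + cos α₂ ≤ 1 + 2 cos α₁`.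
-/

open Metric MeasureTheory Submodule Real
open scoped ENNReal NNReal

noncomputable def wedgeNorm {V : Type*} [NormedAddCommGroup V] [InnerProductSpace ℝ V]
    (x y : V) : ℝ :=
  Real.sqrt (‖x‖ ^ 2 * ‖y‖ ^ 2 - (inner ℝ x y : ℝ) ^ 2)

open scoped RealInnerProductSpace

lemma abs_mul_add_mul_le_abs_add_abs {c s a b : ℝ} (hs : |s| ≤ 1) (ha : |a| ≤ 1) :
    |c * a + s * b| ≤ |c| + |b| :=
  calc |c * a + s * b| ≤ |c| * |a| + |s| * |b| := by
        rw [← abs_mul, ← abs_mul]; exact abs_add_le _ _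
    _ ≤ |c| + |b| := add_le_add (mul_le_of_le_one_right (abs_nonneg c) ha)
        (mul_le_of_le_one_left (abs_nonneg b) hs)

lemma sq_abs_add_abs_complementary_minors_le (p q : Fin 4 → ℝ) :
    (|p 0 * q 1 - p 1 * q 0| + |p 2 * q 3 - p 3 * q 2|) ^ 2 ≤
      (∑ i, p i ^ 2) * (∑ i, q i ^ 2) := by
  set a := p 0 * q 1 - p 1 * q 0
  set b := p 2 * q 3 - p 3 * q 2
  set c := p 0 * q 3 - p 3 * q 0
  set d := p 1 * q 2 - p 2 * q 1
  set e := p 0 * q 2 - p 2 * q 0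
  set f := p 1 * q 3 - p 3 * q 1
  have lagrange : (∑ i, p i ^ 2) * (∑ i, q i ^ 2) =
      a ^ 2 + b ^ 2 + c ^ 2 + d ^ 2 + e ^ 2 + f ^ 2 + (∑ i, p i * q i) ^ 2 := by
    simp only [Fin.sum_univ_four, a, b, c, d, e, f]
    ring
  have plucker : a * b = e * f - c * d := by ring
  have hab : 2 * |a * b| ≤ c ^ 2 + d ^ 2 + e ^ 2 + f ^ 2 := by
    rw [plucker]
    calc 2 * |e * f - c * d| ≤ 2 * (|e| * |f|) + 2 * (|c| * |d|) := by
          rw [← abs_mul, ← abs_mul]; linarith [abs_sub (e * f) (c * d)]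
      _ ≤ c ^ 2 + d ^ 2 + e ^ 2 + f ^ 2 := by
          nlinarith [sq_nonneg (|e| - |f|), sq_nonneg (|c| - |d|), sq_abs e, sq_abs f, sq_abs c,
            sq_abs d]
  calc (|a| + |b|) ^ 2 = a ^ 2 + b ^ 2 + 2 * |a * b| := by
        rw [add_sq, abs_mul, sq_abs, sq_abs]; ring
    _ ≤ _ := by rw [lagrange]; nlinarith [sq_nonneg (∑ i, p i * q i)]

section

variable {E : Type*} [NormedAddCommGroup E] [InnerProductSpace ℝ E]

/-- The inner product `⟪u ∧ v, x ∧ y⟫` of two simple 2-vectors. -/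
def wedgeInner (u v x y : E) : ℝ := ⟪u, x⟫ * ⟪v, y⟫ - ⟪v, x⟫ * ⟪u, y⟫

lemma wedgeInner_smul_add_smul_left (a b : ℝ) (u u' v x y : E) :
    wedgeInner (a • u + b • u') v x y = a * wedgeInner u v x y + b * wedgeInner u' v x y := by
  simp only [wedgeInner, inner_add_left, real_inner_smul_left]
  ring

lemma wedgeInner_smul_add_smul_right (a b : ℝ) (u v v' x y : E) :
    wedgeInner u (a • v + b • v') x y = a * wedgeInner u v x y + b * wedgeInner u v' x y := by
  simp only [wedgeInner, inner_add_left, real_inner_smul_left]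
  ring

lemma orthonormal_pair_iff {u v : E} :
    Orthonormal ℝ ![u, v] ↔ ⟪u, u⟫ = 1 ∧ ⟪v, v⟫ = 1 ∧ ⟪u, v⟫ = 0 := by
  simp only [orthonormal_iff_ite, Fin.forall_fin_two, Matrix.cons_val_zero, Matrix.cons_val_one,
    Fin.isValue, if_true, zero_ne_one, one_ne_zero, if_false, real_inner_comm u v]
  tauto

lemma wedgeNorm_le_norm_mul_norm (x y : E) : wedgeNorm x y ≤ ‖x‖ * ‖y‖ := by
  rw [wedgeNorm, ← Real.sqrt_sq (by positivity : 0 ≤ ‖x‖ * ‖y‖), mul_pow]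
  exact Real.sqrt_le_sqrt (sub_le_self _ (sq_nonneg _))

lemma wedgeNorm_smul_add_smul {u v : E} (h : Orthonormal ℝ ![u, v]) (p₀ p₁ q₀ q₁ : ℝ) :
    wedgeNorm (p₀ • u + p₁ • v) (q₀ • u + q₁ • v) = |p₀ * q₁ - p₁ * q₀| := by
  obtain ⟨huu, hvv, huv⟩ := orthonormal_pair_iff.1 h
  have expand (a b c d : ℝ) : ⟪a • u + b • v, c • u + d • v⟫ = a * c + b * d := by
    simp only [inner_add_left, inner_add_right, real_inner_smul_left, real_inner_smul_right,
      huu, hvv, huv, real_inner_comm u v]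
    ring
  rw [wedgeNorm, ← real_inner_self_eq_norm_sq, ← real_inner_self_eq_norm_sq, expand, expand,
    expand, ← Real.sqrt_sq_eq_abs]
  congr 1
  ring

lemma Orthonormal.abs_wedgeInner_add_abs_wedgeInner_le {v : Fin 4 → E} (hv : Orthonormal ℝ v)
    (x y : E) :
    |wedgeInner (v 0) (v 1) x y| + |wedgeInner (v 2) (v 3) x y| ≤ ‖x‖ * ‖y‖ := by
  have bessel (z : E) : ∑ i, ⟪v i, z⟫ ^ 2 ≤ ‖z‖ ^ 2 := by
    simpa only [Real.norm_eq_abs, sq_abs] using hv.sum_inner_products_le (s := Finset.univ) z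
  refine (pow_le_pow_iff_left₀ (by positivity) (by positivity) two_ne_zero).1 ?_
  calc _ ≤ (∑ i, ⟪v i, x⟫ ^ 2) * (∑ i, ⟪v i, y⟫ ^ 2) :=
        sq_abs_add_abs_complementary_minors_le (fun i ↦ ⟪v i, x⟫) (fun i ↦ ⟪v i, y⟫)
    _ ≤ (‖x‖ * ‖y‖) ^ 2 := by
        rw [mul_pow]
        exact mul_le_mul (bessel x) (bessel y) (Finset.sum_nonneg fun i _ ↦ sq_nonneg _)
          (sq_nonneg _)

variable [FiniteDimensional ℝ E]

lemma starProjection_span_pair {u v : E} (h : Orthonormal ℝ ![u, v]) (x : E) :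
    (span ℝ {u, v}).starProjection x = ⟪u, x⟫ • u + ⟪v, x⟫ • v := by
  classical
  have hproj := (OrthonormalBasis.span h Finset.univ).starProjection_eq_sum_rankOne
  simp only [Finset.coe_image, Finset.coe_univ, Set.image_univ, Matrix.range_cons,
    Matrix.range_empty, Set.union_empty, Set.union_singleton, Finset.univ_eq_attach,
    OrthonormalBasis.span_apply, Finset.sum_attach_univ, Fin.sum_univ_two] at hproj
  rw [Set.pair_comm, hproj]
  simp

lemma wedgeNorm_starProjection_span_pair {u v : E} (h : Orthonormal ℝ ![u, v]) (x y : E) :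
    wedgeNorm ((span ℝ {u, v}).starProjection x) ((span ℝ {u, v}).starProjection y) =
      |wedgeInner u v x y| := by
  rw [starProjection_span_pair h, starProjection_span_pair h, wedgeNorm_smul_add_smul h,
    wedgeInner]

lemma abs_wedgeInner_le {u v : E} (h : Orthonormal ℝ ![u, v]) (x y : E) :
    |wedgeInner u v x y| ≤ ‖x‖ * ‖y‖ := by
  rw [← wedgeNorm_starProjection_span_pair h]
  exact (wedgeNorm_le_norm_mul_norm _ _).trans <| mul_le_mul
    (norm_starProjection_apply_le _ x) (norm_starProjection_apply_le _ y) (norm_nonneg _)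
    (norm_nonneg _)

end

theorem sum_proj_le_of_characteristic_angles_general
    (α₁ α₂ : ℝ) (h0 : 0 ≤ α₁) (h12 : α₁ ≤ α₂) (h2 : α₂ ≤ π / 2)
    (b : OrthonormalBasis (Fin 4) ℝ (EuclideanSpace ℝ (Fin 4)))
    (P1 P2 : Submodule ℝ (EuclideanSpace ℝ (Fin 4)))
    (hP1 : P1 = Submodule.span ℝ {b 0, b 1})
    (hP2 : P2 = Submodule.span ℝ
      {Real.cos α₁ • b 0 + Real.sin α₁ • b 2, Real.cos α₂ • b 1 + Real.sin α₂ • b 3})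
    (x y : EuclideanSpace ℝ (Fin 4))
    (hx : ‖x‖ = 1) (hy : ‖y‖ = 1) :
    wedgeNorm ((orthogonalProjection P1 x : EuclideanSpace ℝ (Fin 4)))
        ((orthogonalProjection P1 y : EuclideanSpace ℝ (Fin 4)))
      + wedgeNorm ((orthogonalProjection P2 x : EuclideanSpace ℝ (Fin 4)))
        ((orthogonalProjection P2 y : EuclideanSpace ℝ (Fin 4)))
      ≤ 1 + 2 * Real.cos α₁ := by
  subst hP1 hP2
  set v := cos α₂ • b 1 + sin α₂ • b 3
  have hb := orthonormal_iff_ite.1 b.orthonormal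
  obtain ⟨h01, h21, h0v, huv⟩ : Orthonormal ℝ ![b 0, b 1] ∧ Orthonormal ℝ ![b 2, b 1] ∧
      Orthonormal ℝ ![b 0, v] ∧ Orthonormal ℝ ![cos α₁ • b 0 + sin α₁ • b 2, v] := by
    simp only [v, orthonormal_pair_iff, inner_add_left, inner_add_right, real_inner_smul_left,
      real_inner_smul_right, hb]
    norm_num [Fin.ext_iff, ← sq]
  simp only [coe_orthogonalProjectionOnto_apply, wedgeNorm_starProjection_span_pair h01,
    wedgeNorm_starProjection_span_pair huv, wedgeInner_smul_add_smul_left]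
  have hxy : ‖x‖ * ‖y‖ = 1 := by rw [hx, hy, one_mul]
  have hsplit₁ := abs_mul_add_mul_le_abs_add_abs (c := cos α₁) (b := wedgeInner (b 2) v x y)
    (abs_sin_le_one α₁) ((abs_wedgeInner_le h0v x y).trans_eq hxy)
  have hsplit₂ : |wedgeInner (b 2) v x y| ≤ |cos α₂| + |wedgeInner (b 2) (b 3) x y| := by
    rw [wedgeInner_smul_add_smul_right]
    exact abs_mul_add_mul_le_abs_add_abs (abs_sin_le_one α₂)
      ((abs_wedgeInner_le h21 x y).trans_eq hxy)
  have hplucker := b.orthonormal.abs_wedgeInner_add_abs_wedgeInner_le x y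
  have hc₁ : 0 ≤ cos α₁ := cos_nonneg_of_mem_Icc ⟨by linarith [pi_pos], by linarith⟩
  have hc₂ : 0 ≤ cos α₂ := cos_nonneg_of_mem_Icc ⟨by linarith [pi_pos], h2⟩
  have hc : cos α₂ ≤ cos α₁ := cos_le_cos_of_nonneg_of_le_pi h0 (by linarith [pi_pos]) h12
  rw [abs_of_nonneg hc₁] at hsplit₁
  rw [abs_of_nonneg hc₂] at hsplit₂
  linarith

/-- If `P¹, P²` are two 2-planes in `ℝ⁴` with characteristic angles `(α₁, α₂)`,
`0 ≤ α₁ ≤ α₂ ≤ π/2`, i.e. in an orthonormal basis `e₁,…,e₄`, `P¹ = span(e₁,e₂)` and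
`P² = span(cos α₁ e₁ + sin α₁ e₃, cos α₂ e₂ + sin α₂ e₄)`, then for every unit simple
2-vector `ζ = x ∧ y`, `|p¹ζ| + |p²ζ| ≤ 1 + 2 cos α₁`. -/
theorem sum_proj_le_of_characteristic_angles
    (α₁ α₂ : ℝ) (h0 : 0 ≤ α₁) (h12 : α₁ ≤ α₂) (h2 : α₂ ≤ π / 2)
    (b : OrthonormalBasis (Fin 4) ℝ (EuclideanSpace ℝ (Fin 4)))
    (P1 P2 : Submodule ℝ (EuclideanSpace ℝ (Fin 4)))
    (hP1 : P1 = Submodule.span ℝ {b 0, b 1})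
    (hP2 : P2 = Submodule.span ℝ
      {Real.cos α₁ • b 0 + Real.sin α₁ • b 2, Real.cos α₂ • b 1 + Real.sin α₂ • b 3})
    (x y : EuclideanSpace ℝ (Fin 4))
    (hx : ‖x‖ = 1) (hy : ‖y‖ = 1) (hxy : (inner ℝ x y : ℝ) = 0) :
    wedgeNorm ((orthogonalProjection P1 x : EuclideanSpace ℝ (Fin 4)))
        ((orthogonalProjection P1 y : EuclideanSpace ℝ (Fin 4)))
      + wedgeNorm ((orthogonalProjection P2 x : EuclideanSpace ℝ (Fin 4)))
        ((orthogonalProjection P2 y : EuclideanSpace ℝ (Fin 4)))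
      ≤ 1 + 2 * Real.cos α₁ :=
  sum_proj_le_of_characteristic_angles_general α₁ α₂ h0 h12 h2 b P1 P2 hP1 hP2 x y hx hy
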